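/- arXiv:1307.8419 — 2 statements merged into one kernel-verified Lean document; each statement's English description precedes it below -/
import Mathlib

section
/- For every integer t ≥ 2, the center of n_{2,t} equals the t-th term of the lower central series of n_{2,t} (its last nonzero term). -/
/-!
Let `φ` embed the free Lie algebra into the free associative algebra on the same generators and let
`θ` send a word `x₁ ⋯ xₙ` to the right-normed bracket `⁅x₁, ⁅x₂, ⋯, xₙ⁆⁆`. The identity
`θ (φ z * p) = ⁅z, θ p⁆ + ε(p) • θ (φ z)` (with `ε` the constant term) makes `D = θ ∘ φ` a
derivation fixing the generators, so `D` multiplies brackets of degree `n` by `n` and the free Lie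
algebra is the direct sum of the eigenspaces of `D`, its degree components.

If `⁅z, xᵢ⁆ ∈ L^{t+1}` for both generators, comparing degree components shows that every component
`c` of `z` of degree `< t` commutes with `x₁` and `x₂`. Then `φ c` commutes with both generators of
the free associative algebra, so it is a constant, hence `0`; thus `D c = θ (φ c) = 0`, and `c = 0`
because `D` acts on it by its (nonzero) degree. So `z ∈ L^t`. Conversely `L^t` is central modulo
`L^{t+1}`.
-/

noncomputable section

/-- The free Lie algebra over `ℂ` on two generators. -/
abbrev FL : Type := FreeLieAlgebra ℂ (Fin 2)

/-- The ideal `L^{t+1}` of the free Lie algebra `L = FL`. -/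
def nIdeal (t : ℕ) : LieIdeal ℂ FL := LieModule.lowerCentralSeries ℂ FL FL t

/-- The free `t`-step nilpotent complex Lie algebra on two generators. -/
abbrev n2 (t : ℕ) : Type := FL ⧸ nIdeal t

open LieModule

theorem LieModule.lie_mem_lowerCentralSeries_add {R L : Type*} [CommRing R] [LieRing L]
    [LieAlgebra R L] {j k : ℕ} {x y : L} (hx : x ∈ lowerCentralSeries R L L j)
    (hy : y ∈ lowerCentralSeries R L L k) : ⁅x, y⁆ ∈ lowerCentralSeries R L L (j + k + 1) := by
  induction j generalizing x y k with
  | zero =>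
    rw [zero_add, lowerCentralSeries_succ]
    exact LieSubmodule.lie_mem_lie (LieSubmodule.mem_top x) hy
  | succ j ih =>
    rw [lowerCentralSeries_succ, ← LieSubmodule.mem_toSubmodule,
      LieSubmodule.lieIdeal_oper_eq_linear_span'] at hx
    induction hx using Submodule.span_induction with
    | mem _ h =>
      obtain ⟨a, -, n, hn, rfl⟩ := h
      have hay : ⁅a, y⁆ ∈ lowerCentralSeries R L L (k + 1) := by
        rw [lowerCentralSeries_succ]; exact LieSubmodule.lie_mem_lie (LieSubmodule.mem_top a) hy
      rw [lie_lie]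
      refine sub_mem ?_ ?_
      · rw [show j + 1 + k + 1 = j + k + 1 + 1 by omega, lowerCentralSeries_succ]
        exact LieSubmodule.lie_mem_lie (LieSubmodule.mem_top a) (ih hn hy)
      · simpa only [show j + (k + 1) + 1 = j + 1 + k + 1 by omega] using ih hn hay
    | zero => simp
    | add _ _ _ _ h₁ h₂ => rw [add_lie]; exact add_mem h₁ h₂
    | smul c _ _ h => rw [smul_lie]; exact SMulMemClass.smul_mem c h

theorem LieModule.toSubmodule_lowerCentralSeries_quotient {R L : Type*} [CommRing R] [LieRing L]
    [LieAlgebra R L] (I : LieIdeal R L) (k : ℕ) :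
    (lowerCentralSeries R (L ⧸ I) (L ⧸ I) k).toSubmodule =
      ((lowerCentralSeries R L L k).map (LieSubmodule.Quotient.mk' I)).toSubmodule := by
  rw [← coe_lowerCentralSeries_ideal_quot_eq,
    map_lowerCentralSeries_eq k (LieSubmodule.Quotient.surjective_mk' I)]

theorem iSupIndep.eq_zero_of_sum_mem_iSup_ne {R M ι : Type*} [Ring R] [AddCommGroup M]
    [Module R M] {p : ι → Submodule R M} (hp : iSupIndep p) {s : Finset ι} {w : ι → M}
    (hw : ∀ i ∈ s, w i ∈ p i) {n : ι} (hn : n ∈ s) (h : ∑ i ∈ s, w i ∈ ⨆ (i) (_ : i ≠ n), p i) :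
    w n = 0 := by
  classical
  have hrest : ∑ i ∈ s.erase n, w i ∈ ⨆ (i) (_ : i ≠ n), p i :=
    Submodule.sum_mem _ fun i hi =>
      Submodule.mem_iSup_of_mem i <| Submodule.mem_iSup_of_mem (Finset.ne_of_mem_erase hi)
        (hw i (Finset.mem_of_mem_erase hi))
  have hwn : w n = ∑ i ∈ s, w i - ∑ i ∈ s.erase n, w i := by
    rw [← Finset.add_sum_erase s w hn, add_sub_cancel_right]
  exact (Submodule.mem_bot R).mp <| (hp n).le_bot ⟨hw n hn, hwn ▸ sub_mem h hrest⟩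

theorem MonoidAlgebra.coeff_one_mul_of_freeMonoid {R X : Type*} [Semiring R]
    (a b : MonoidAlgebra R (FreeMonoid X)) : (a * b).coeff 1 = a.coeff 1 * b.coeff 1 :=
  coeff_mul_mul_of_uniqueMul (a0 := 1) (b0 := 1) fun _ _ _ _ h => mul_eq_one'.mp h

theorem MonoidAlgebra.eq_single_one_of_forall_commute_of {R α : Type*} [Semiring R]
    [Nontrivial α] (P : MonoidAlgebra R (FreeMonoid α))
    (hP : ∀ a, Commute P (single (FreeMonoid.of a) 1)) : P = single 1 (P.coeff 1) := by
  ext w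
  by_cases hw : w = 1
  · simp [hw]
  rw [coeff_single, Finsupp.single_eq_of_ne' (Ne.symm hw)]
  obtain ⟨x, xs, rfl⟩ : ∃ x xs, w = FreeMonoid.of x * xs := by
    cases w using FreeMonoid.casesOn with
    | one => exact absurd rfl hw
    | of_mul x xs => exact ⟨x, xs, rfl⟩
  obtain ⟨j, hj⟩ := exists_ne x
  have key := congrArg (coeff · (FreeMonoid.of x * xs * FreeMonoid.of j)) (hP j).eq
  rwa [coeff_mul_single_mul, mul_one, coeff_single_mul_of_forall_mul_ne] at key
  intro d hd
  have := congrArg FreeMonoid.toList hd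
  simp only [FreeMonoid.toList_mul, FreeMonoid.toList_of, List.cons_append,
    List.cons.injEq] at this
  exact hj this.1

namespace FreeLieAlgebra

theorem lieSpan_range_of (R X : Type*) [CommRing R] :
    LieSubalgebra.lieSpan R (FreeLieAlgebra R X) (Set.range (of R)) = ⊤ := by
  set S := LieSubalgebra.lieSpan R (FreeLieAlgebra R X) (Set.range (of R))
  have hid : S.incl.comp (lift R fun x => (⟨of R x, LieSubalgebra.subset_lieSpan ⟨x, rfl⟩⟩ : S)) =
      (LieHom.id : FreeLieAlgebra R X →ₗ⁅R⁆ _) :=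
    hom_ext fun x => by simp
  refine eq_top_iff.mpr fun z _ => ?_
  have hz : S.incl (lift R _ z) = z := DFunLike.congr_fun hid z
  exact hz ▸ Subtype.prop _

@[elab_as_elim]
theorem induction_on {R X : Type*} [CommRing R] {p : FreeLieAlgebra R X → Prop}
    (z : FreeLieAlgebra R X) (of : ∀ x, p (of R x)) (zero : p 0)
    (add : ∀ a b, p a → p b → p (a + b)) (smul : ∀ (c : R) a, p a → p (c • a))
    (lie : ∀ a b, p a → p b → p ⁅a, b⁆) : p z := by
  have hz : z ∈ LieSubalgebra.lieSpan R _ (Set.range (FreeLieAlgebra.of R)) := by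
    rw [lieSpan_range_of]; trivial
  induction hz using LieSubalgebra.lieSpan_induction with
  | mem _ h => obtain ⟨x, rfl⟩ := h; exact of x
  | zero => exact zero
  | add a b _ _ ha hb => exact add a b ha hb
  | smul c a _ ha => exact smul c a ha
  | lie a b _ _ ha hb => exact lie a b ha hb

open MonoidAlgebra

attribute [local instance 100] LieRing.ofAssociativeRing

section CommRing

variable {R X : Type*} [CommRing R]

variable (R X) in
def toFreeMonoidAlgebra : FreeLieAlgebra R X →ₗ⁅R⁆ MonoidAlgebra R (FreeMonoid X) :=
  lift R fun x => single (FreeMonoid.of x) 1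

@[simp]
theorem toFreeMonoidAlgebra_of (x : X) :
    toFreeMonoidAlgebra R X (of R x) = single (FreeMonoid.of x) 1 :=
  lift_of_apply _ x

theorem toFreeMonoidAlgebra_lie (a b : FreeLieAlgebra R X) :
    toFreeMonoidAlgebra R X ⁅a, b⁆ =
      toFreeMonoidAlgebra R X a * toFreeMonoidAlgebra R X b -
        toFreeMonoidAlgebra R X b * toFreeMonoidAlgebra R X a := by
  rw [LieHom.map_lie, LieRing.of_associative_ring_bracket]

theorem coeff_one_toFreeMonoidAlgebra (z : FreeLieAlgebra R X) :
    (toFreeMonoidAlgebra R X z).coeff 1 = 0 := by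
  induction z using induction_on with
  | of x => simp [coeff_single, Finsupp.single_eq_of_ne' (FreeMonoid.of_ne_one x)]
  | zero => simp
  | add a b ha hb => simp [ha, hb]
  | smul c a ha => simp [ha]
  | lie a b ha hb =>
    rw [toFreeMonoidAlgebra_lie, coeff_sub, Finsupp.sub_apply, coeff_one_mul_of_freeMonoid,
      coeff_one_mul_of_freeMonoid, ha, hb, mul_zero, sub_zero]

variable (R) in
def rightNormedBracket : List X → FreeLieAlgebra R X
  | [] => 0
  | [x] => of R x
  | x :: y :: u => ⁅of R x, rightNormedBracket (y :: u)⁆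

variable (R X) in
def bracketing : MonoidAlgebra R (FreeMonoid X) →ₗ[R] FreeLieAlgebra R X :=
  (Finsupp.lsum R fun w => LinearMap.toSpanSingleton R _ (rightNormedBracket R w.toList)) ∘ₗ
    (coeffLinearEquiv R).toLinearMap

@[simp]
theorem bracketing_single (w : FreeMonoid X) (c : R) :
    bracketing R X (single w c) = c • rightNormedBracket R w.toList :=
  Finsupp.lsum_single R _ _ _

theorem bracketing_single_of_mul (x : X) (p : MonoidAlgebra R (FreeMonoid X)) :
    bracketing R X (single (FreeMonoid.of x) 1 * p) =
      ⁅of R x, bracketing R X p⁆ + p.coeff 1 • of R x := by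
  induction p using MonoidAlgebra.induction_linear with
  | zero => simp
  | add p q hp hq =>
    simp only [mul_add, map_add, hp, hq, lie_add, coeff_add, Finsupp.add_apply, add_smul]
    abel
  | single w c =>
    cases w using FreeMonoid.casesOn with
    | one => simp [rightNormedBracket, coeff_single]
    | of_mul y w =>
      rw [single_mul_single, bracketing_single, bracketing_single, coeff_single,
        Finsupp.single_eq_of_ne' fun h => FreeMonoid.of_ne_one y (mul_eq_one'.mp h).1]
      simp [rightNormedBracket]

theorem bracketing_toFreeMonoidAlgebra_mul (z : FreeLieAlgebra R X)
    (p : MonoidAlgebra R (FreeMonoid X)) :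
    bracketing R X (toFreeMonoidAlgebra R X z * p) =
      ⁅z, bracketing R X p⁆ + p.coeff 1 • bracketing R X (toFreeMonoidAlgebra R X z) := by
  induction z using induction_on generalizing p with
  | of x => simp [bracketing_single_of_mul, rightNormedBracket]
  | zero => simp
  | add a b ha hb =>
    rw [map_add, add_mul, map_add, ha, hb, map_add, smul_add, add_lie]
    abel
  | smul c a ha =>
    rw [map_smul, smul_mul_assoc, map_smul, ha, map_smul, smul_add, smul_lie, smul_comm c]
  | lie a b ha hb =>
    simp only [toFreeMonoidAlgebra_lie, sub_mul, mul_assoc, map_sub, ha, hb,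
      coeff_one_mul_of_freeMonoid, coeff_one_toFreeMonoidAlgebra, zero_mul, zero_smul, add_zero,
      lie_lie, lie_add, lie_smul, smul_sub]
    abel

variable (R X) in
def degreeDerivation : LieDerivation R (FreeLieAlgebra R X) (FreeLieAlgebra R X) where
  toLinearMap := bracketing R X ∘ₗ (toFreeMonoidAlgebra R X).toLinearMap
  leibniz' a b := by
    simp only [LinearMap.coe_comp, LieHom.coe_toLinearMap, Function.comp_apply,
      toFreeMonoidAlgebra_lie, map_sub, bracketing_toFreeMonoidAlgebra_mul,
      coeff_one_toFreeMonoidAlgebra, zero_smul, add_zero]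

theorem degreeDerivation_apply (z : FreeLieAlgebra R X) :
    degreeDerivation R X z = bracketing R X (toFreeMonoidAlgebra R X z) :=
  rfl

@[simp]
theorem degreeDerivation_of (x : X) : degreeDerivation R X (of R x) = of R x := by
  simp [degreeDerivation_apply, rightNormedBracket]

end CommRing

section Field

variable {K X : Type*} [Field K]

-- The component of degree `k + 1`, so that it pairs with `lowerCentralSeries … k = L^{k+1}`.
variable (K X) in
def homogeneous (k : ℕ) : Submodule K (FreeLieAlgebra K X) :=
  Module.End.eigenspace (degreeDerivation K X).toLinearMap ((k : K) + 1)

theorem mem_homogeneous {k : ℕ} {a : FreeLieAlgebra K X} :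
    a ∈ homogeneous K X k ↔ degreeDerivation K X a = ((k : K) + 1) • a :=
  Module.End.mem_eigenspace_iff

theorem of_mem_homogeneous_zero (x : X) : of K x ∈ homogeneous K X 0 := by
  simp [mem_homogeneous]

theorem lie_mem_homogeneous {j k : ℕ} {a b : FreeLieAlgebra K X} (ha : a ∈ homogeneous K X j)
    (hb : b ∈ homogeneous K X k) : ⁅a, b⁆ ∈ homogeneous K X (j + k + 1) := by
  rw [mem_homogeneous] at ha hb ⊢
  rw [LieDerivation.apply_lie_eq_add, ha, hb, lie_smul, smul_lie, ← add_smul]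
  push_cast
  ring_nf

theorem iSupIndep_homogeneous [CharZero K] : iSupIndep (homogeneous K X) :=
  (Module.End.eigenspaces_iSupIndep _).comp fun _ _ h => by simpa using h

theorem eq_zero_of_mem_homogeneous_of_forall_lie_of_eq_zero [CharZero K] [Nontrivial X] {k : ℕ}
    {a : FreeLieAlgebra K X} (ha : a ∈ homogeneous K X k) (h : ∀ x : X, ⁅a, of K x⁆ = 0) :
    a = 0 := by
  have hcomm : ∀ x, Commute (toFreeMonoidAlgebra K X a) (single (FreeMonoid.of x) 1) := fun x =>
    sub_eq_zero.mp <| by rw [← toFreeMonoidAlgebra_of, ← toFreeMonoidAlgebra_lie, h, map_zero]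
  have hφ : toFreeMonoidAlgebra K X a = 0 := by
    rw [eq_single_one_of_forall_commute_of _ hcomm, coeff_one_toFreeMonoidAlgebra, single_zero]
  have hD : ((k : K) + 1) • a = 0 := by
    rw [← mem_homogeneous.mp ha, degreeDerivation_apply, hφ, map_zero]
  exact (smul_eq_zero.mp hD).resolve_left (Nat.cast_add_one_ne_zero k)

variable (K X) in
def lcsHomogeneous (k : ℕ) : Submodule K (FreeLieAlgebra K X) :=
  homogeneous K X k ⊓ (lowerCentralSeries K (FreeLieAlgebra K X) (FreeLieAlgebra K X) k).toSubmodule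

variable (K X) in
def degreeFiltration (n : ℕ) : Submodule K (FreeLieAlgebra K X) :=
  ⨆ k, lcsHomogeneous K X (n + k)

theorem lcsHomogeneous_le_degreeFiltration {n k : ℕ} (h : n ≤ k) :
    lcsHomogeneous K X k ≤ degreeFiltration K X n :=
  le_iSup_of_le (k - n) (by rw [Nat.add_sub_cancel' h])

theorem lie_mem_degreeFiltration {m n : ℕ} {a b : FreeLieAlgebra K X}
    (ha : a ∈ degreeFiltration K X m) (hb : b ∈ degreeFiltration K X n) :
    ⁅a, b⁆ ∈ degreeFiltration K X (m + n + 1) := by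
  induction ha using Submodule.iSup_induction' with
  | mem j a ha =>
    induction hb using Submodule.iSup_induction' with
    | mem k b hb =>
      exact lcsHomogeneous_le_degreeFiltration (by omega)
        ⟨lie_mem_homogeneous ha.1 hb.1, lie_mem_lowerCentralSeries_add ha.2 hb.2⟩
    | zero => simp
    | add _ _ _ _ h₁ h₂ => rw [lie_add]; exact add_mem h₁ h₂
  | zero => simp
  | add _ _ _ _ h₁ h₂ => rw [add_lie]; exact add_mem h₁ h₂

theorem degreeFiltration_zero : degreeFiltration K X 0 = ⊤ := by
  refine Submodule.eq_top_iff'.mpr fun z => ?_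
  induction z using induction_on with
  | of x => exact lcsHomogeneous_le_degreeFiltration le_rfl ⟨of_mem_homogeneous_zero x, trivial⟩
  | zero => exact zero_mem _
  | add a b ha hb => exact add_mem ha hb
  | smul c a ha => exact Submodule.smul_mem _ c ha
  | lie a b ha hb =>
    exact iSup_le (fun k => lcsHomogeneous_le_degreeFiltration (Nat.zero_le _))
      (lie_mem_degreeFiltration ha hb)

theorem lowerCentralSeries_le_degreeFiltration (t : ℕ) :
    (lowerCentralSeries K (FreeLieAlgebra K X) (FreeLieAlgebra K X) t).toSubmodule ≤
      degreeFiltration K X t := by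
  induction t with
  | zero => simp [degreeFiltration_zero]
  | succ t ih =>
    rw [lowerCentralSeries_succ, LieSubmodule.lieIdeal_oper_eq_linear_span', Submodule.span_le]
    rintro _ ⟨a, -, b, hb, rfl⟩
    have ha : a ∈ degreeFiltration K X 0 := degreeFiltration_zero (K := K) (X := X) ▸ trivial
    simpa only [zero_add, SetLike.mem_coe] using lie_mem_degreeFiltration ha (ih hb)

theorem mem_lowerCentralSeries_of_forall_lie_of_mem [CharZero K] [Nontrivial X] {t : ℕ}
    {z : FreeLieAlgebra K X} (h : ∀ x : X, ⁅z, of K x⁆ ∈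
      lowerCentralSeries K (FreeLieAlgebra K X) (FreeLieAlgebra K X) (t + 1)) :
    z ∈ lowerCentralSeries K (FreeLieAlgebra K X) (FreeLieAlgebra K X) t := by
  have hz : z ∈ degreeFiltration K X 0 := by rw [degreeFiltration_zero]; trivial
  simp only [degreeFiltration, zero_add] at hz
  obtain ⟨c, hc, rfl⟩ := (Submodule.mem_iSup_iff_exists_finsupp _ _).mp hz
  -- `⁅z, of K x⁆` has no component of degree `≤ t + 1`.
  have hlie : ∀ n < t, ∀ x : X, ⁅c n, of K x⁆ = 0 := by
    intro n hn x
    by_cases hn' : n ∈ c.support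
    swap
    · rw [Finsupp.notMem_support_iff.mp hn', zero_lie]
    have hind : iSupIndep fun k => homogeneous K X (k + 1) :=
      iSupIndep_homogeneous.comp (add_left_injective 1)
    have hw : ∀ k ∈ c.support, ⁅c k, of K x⁆ ∈ homogeneous K X (k + 1) := fun k _ => by
      simpa only [add_zero] using lie_mem_homogeneous (hc k).1 (of_mem_homogeneous_zero x)
    refine hind.eq_zero_of_sum_mem_iSup_ne hw hn' ?_
    rw [← sum_lie]
    have hmem := lowerCentralSeries_le_degreeFiltration (t + 1) (h x)
    refine (iSup_le fun k => ?_ : degreeFiltration K X (t + 1) ≤ _) hmem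
    exact inf_le_left.trans (le_iSup₂_of_le (t + k) (by omega) (by rw [add_right_comm]))
  refine Submodule.sum_mem _ fun k hk => ?_
  have htk : t ≤ k := by
    by_contra! hkt
    exact Finsupp.mem_support_iff.mp hk
      (eq_zero_of_mem_homogeneous_of_forall_lie_of_eq_zero (hc k).1 (hlie k hkt))
  exact antitone_lowerCentralSeries _ _ _ htk (hc k).2

end Field

end FreeLieAlgebra

/-- For every `t ≥ 2`, the center of `n_{2,t}` equals the `t`-th term of its lower
central series (its last nonzero term; Mathlib index `t - 1`). -/
theorem n2_center (t : ℕ) (ht : 2 ≤ t) :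
    LieAlgebra.center ℂ (n2 t) = LieModule.lowerCentralSeries ℂ (n2 t) (n2 t) (t - 1) := by
  obtain ⟨s, rfl⟩ : ∃ s, t = s + 1 := ⟨t - 1, by omega⟩
  rw [Nat.add_sub_cancel]
  have hquot := toSubmodule_lowerCentralSeries_quotient (nIdeal (s + 1))
  refine le_antisymm (fun z hz => ?_) ?_
  · obtain ⟨Z, rfl⟩ := LieSubmodule.Quotient.surjective_mk' (nIdeal (s + 1)) z
    have hZ : ∀ x : Fin 2, ⁅Z, FreeLieAlgebra.of ℂ x⁆ ∈ nIdeal (s + 1) := fun x => by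
      rw [← LieSubmodule.Quotient.mk_eq_zero', LieSubmodule.Quotient.mk_bracket, ← lie_skew,
        neg_eq_zero]
      exact hz _
    rw [← LieSubmodule.mem_toSubmodule, hquot]
    exact LieSubmodule.mem_map_of_mem
      (FreeLieAlgebra.mem_lowerCentralSeries_of_forall_lie_of_mem hZ)
  · rw [LieModule.le_max_triv_iff_bracket_eq_bot, ← lowerCentralSeries_succ,
      ← LieSubmodule.toSubmodule_inj, hquot,
      (LieSubmodule.Quotient.map_mk'_eq_bot_le (nIdeal (s + 1))
        (lowerCentralSeries ℂ FL FL (s + 1))).mpr le_rfl, LieSubmodule.bot_toSubmodule,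
      LieSubmodule.bot_toSubmodule]
end
end

section
/- Let g be a Lie algebra over a field that is nilpotent of nilindex at most t (i.e. the (t+1)-st term of its lower central series vanishes), and let D be a derivation of g whose image is contained in the derived subalgebra [g, g]. Then D is a nilpotent linear endomorphism of g; in fact D^t = 0. -/
open LieModule LieSubmodule

lemma lcs_lie_lcs (K : Type*) [Field K] (g : Type*) [LieRing g] [LieAlgebra K g] :
    ∀ i j : ℕ, ∀ x ∈ lowerCentralSeries K g g i, ∀ n ∈ lowerCentralSeries K g g j,
      ⁅x, n⁆ ∈ lowerCentralSeries K g g (i + j + 1) := by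
  intro i
  induction i with
  | zero =>
    intro j x _ n hn
    rw [Nat.zero_add, lowerCentralSeries_succ]
    exact lie_mem_lie (LieSubmodule.mem_top x) hn
  | succ i ih =>
    intro j x hx n hn
    rw [lowerCentralSeries_succ, ← LieSubmodule.mem_toSubmodule,
      lieIdeal_oper_eq_linear_span'] at hx
    induction hx using Submodule.span_induction with
    | mem m hm =>
      obtain ⟨y, -, m, hm, rfl⟩ := hm
      rw [lie_lie]
      refine sub_mem ?_ ?_
      · have h1 : ⁅m, n⁆ ∈ lowerCentralSeries K g g (i + j + 1) := ih j m hm n hn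
        have h2 : ⁅y, ⁅m, n⁆⁆ ∈ lowerCentralSeries K g g (i + j + 1 + 1) := by
          rw [LieModule.lowerCentralSeries_succ]
          exact lie_mem_lie (LieSubmodule.mem_top y) h1
        have hidx : i + j + 1 + 1 = i + 1 + j + 1 := by omega
        rwa [hidx] at h2
      · have h1 : ⁅y, n⁆ ∈ lowerCentralSeries K g g (j + 1) := by
          rw [LieModule.lowerCentralSeries_succ]
          exact lie_mem_lie (LieSubmodule.mem_top y) hn
        have h2 := ih (j + 1) m hm _ h1
        have hidx : i + (j + 1) + 1 = i + 1 + j + 1 := by omega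
        rwa [hidx] at h2
    | zero => simp
    | add a b _ _ ha hb => rw [add_lie]; exact add_mem ha hb
    | smul c a _ ha => rw [smul_lie]; exact Submodule.smul_mem _ c ha

/-- Let `g` be a Lie algebra over a field that is nilpotent of nilindex at most `t`
(the `(t+1)`-st term of its lower central series vanishes; Mathlib index `t`), and let
`D` be a derivation of `g` with image contained in the derived subalgebra `[g, g]`.
Then `D` is a nilpotent endomorphism; in fact `D ^ t = 0`. -/
theorem derivation_into_derived_nilpotent
    (K : Type*) [Field K] (g : Type*) [LieRing g] [LieAlgebra K g]
    (t : ℕ) (hg : LieModule.lowerCentralSeries K g g t = ⊥)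
    (D : LieDerivation K g g)
    (hD : ∀ a : g, D a ∈ (⁅(⊤ : LieIdeal K g), (⊤ : LieIdeal K g)⁆ : LieIdeal K g)) :
    IsNilpotent (D.toLinearMap) ∧ D.toLinearMap ^ t = 0 := by
  have hD1 : ∀ a : g, D a ∈ lowerCentralSeries K g g 1 := by
    intro a
    rw [lowerCentralSeries_succ, lowerCentralSeries_zero]
    exact hD a
  have key : ∀ j : ℕ, ∀ x ∈ lowerCentralSeries K g g j,
      D x ∈ lowerCentralSeries K g g (j + 1) := by
    intro j
    induction j with
    | zero => intro x _; exact hD1 x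
    | succ j ih =>
      intro x hx
      rw [lowerCentralSeries_succ, ← LieSubmodule.mem_toSubmodule,
        lieIdeal_oper_eq_linear_span'] at hx
      induction hx using Submodule.span_induction with
      | mem m hm =>
        obtain ⟨y, -, m, hm, rfl⟩ := hm
        rw [D.apply_lie_eq_add]
        refine add_mem ?_ ?_
        · rw [LieModule.lowerCentralSeries_succ]
          exact lie_mem_lie (LieSubmodule.mem_top y) (ih m hm)
        · have h1 := lcs_lie_lcs K g 1 j (D y) (hD1 y) m hm
          have hidx : 1 + j + 1 = j + 1 + 1 := by omega
          rwa [hidx] at h1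
      | zero => simp
      | add a b _ _ ha hb => rw [map_add]; exact add_mem ha hb
      | smul c a _ ha => rw [map_smul]; exact Submodule.smul_mem _ c ha
  have ht : D.toLinearMap ^ t = 0 := by
    ext x
    have : (D.toLinearMap ^ t) x ∈ lowerCentralSeries K g g t := by
      clear hg
      induction t with
      | zero => simp
      | succ t ih =>
        rw [pow_succ', Module.End.mul_apply]
        exact key t _ ih
    rw [hg] at this
    simpa using this
  exact ⟨⟨t, ht⟩, ht⟩
end
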